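/- Decomposition lemma for the cross-validated selector (Lemma 1): For every α̂ ∈ 𝒥 and every real δ ≥ −1: 𝔼[∫ L_{α̂}(D₀)(X) dP] ≤ (1+2δ) · inf_{α̃ ∈ W_{α̂}} 𝔼[∫ L_{α̃}(D₀)(X) dP] + (1/√n₁) 𝔼[ sup_{α ∈ 𝒥} ((1+δ) ∫ L_α(D₀) d𝔾₁ − δ√n₁ ∫ L_α(D₀) dP) ] + (1/√n₁) 𝔼[ sup_{α ∈ 𝒥} ( −(1+δ) ∫ L_α(D₀) d𝔾₁ − δ√n₁ ∫ L_α(D₀) dP ) ], where 𝔾₁ := √n₁ (ℙ₁ − P) is the empirical process of D₁, i.e. ∫ g d𝔾₁ := √n₁ (∫ g dℙ₁ − ∫ g dP). -/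

import Mathlib

set_option autoImplicit false

open MeasureTheory Pointwise

noncomputable section

/-- Decomposition lemma for the cross-validated selector (Lemma 1): for every `α̂` and
every `δ ≥ -1`, the true risk of `α̂` is bounded by `(1+2δ)` times the best true risk
over the set `W_α̂` of indices outperformed by `α̂` on validation, plus `1/√n₁` times the
expectations of the two penalized suprema of the empirical process `𝔾₁ = √n₁(ℙ₁ - P)`. -/
theorem cross_validation_decomposition
    {d r r' n₀ n₁ : ℕ} (hn₁ : 0 < n₁)
    (ι : Type*)
    (P : Measure ((Fin d → ℝ) × (Fin r → ℝ))) [IsProbabilityMeasure P]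
    (θ : ι → (Fin n₀ → (Fin d → ℝ) × (Fin r → ℝ)) → (Fin d → ℝ) → (Fin r' → ℝ))
    (Lloss : (Fin r' → ℝ) → (Fin r → ℝ) → ℝ) (hLloss : ∀ u y, 0 ≤ Lloss u y)
    (Lα : ι → (Fin n₀ → (Fin d → ℝ) × (Fin r → ℝ)) →
      ((Fin d → ℝ) × (Fin r → ℝ)) → ℝ)
    (hLα : ∀ α D₀ z, Lα α D₀ z = Lloss (θ α D₀ z.1) z.2)
    (μ₀ : Measure (Fin n₀ → (Fin d → ℝ) × (Fin r → ℝ)))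
    (hμ₀ : μ₀ = Measure.pi fun _ : Fin n₀ => P)
    (μ : Measure ((Fin n₀ → (Fin d → ℝ) × (Fin r → ℝ)) ×
      (Fin n₁ → (Fin d → ℝ) × (Fin r → ℝ))))
    (hμ : μ = μ₀.prod (Measure.pi fun _ : Fin n₁ => P))
    (Risk ValRisk : ι → ℝ)
    (hRisk : ∀ α, Risk α = ∫ D₀, ∫ z, Lα α D₀ z ∂P ∂μ₀)
    (hValRisk : ∀ α, ValRisk α =
      ∫ ω, (n₁ : ℝ)⁻¹ * ∑ l : Fin n₁, Lα α ω.1 (ω.2 l) ∂μ)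
    (hRiskInt : ∀ α, Integrable (fun D₀ => ∫ z, Lα α D₀ z ∂P) μ₀)
    (hValInt : ∀ α, Integrable
      (fun ω => (n₁ : ℝ)⁻¹ * ∑ l : Fin n₁, Lα α ω.1 (ω.2 l)) μ)
    -- the empirical process of `D₁` evaluated at the loss of `α`:
    -- `∫ L_α(D₀) d𝔾₁ = √n₁ (∫ L_α(D₀) dℙ₁ - ∫ L_α(D₀) dP)`
    (G : ι → ((Fin n₀ → (Fin d → ℝ) × (Fin r → ℝ)) ×
      (Fin n₁ → (Fin d → ℝ) × (Fin r → ℝ))) → ℝ)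
    (hG : ∀ α ω, G α ω = Real.sqrt (n₁ : ℝ) *
      ((n₁ : ℝ)⁻¹ * ∑ l : Fin n₁, Lα α ω.1 (ω.2 l) - ∫ z, Lα α ω.1 z ∂P))
    (δ : ℝ) (hδ : -1 ≤ δ)
    (αh : ι)
    (W : Set ι) (hW : W = {β | ValRisk αh ≤ ValRisk β})
    (S₁ S₂ : ((Fin n₀ → (Fin d → ℝ) × (Fin r → ℝ)) ×
      (Fin n₁ → (Fin d → ℝ) × (Fin r → ℝ))) → ℝ)
    (hS₁ : ∀ ω, S₁ ω = ⨆ α : ι,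
      ((1 + δ) * G α ω - δ * Real.sqrt (n₁ : ℝ) * ∫ z, Lα α ω.1 z ∂P))
    (hS₂ : ∀ ω, S₂ ω = ⨆ α : ι,
      (-(1 + δ) * G α ω - δ * Real.sqrt (n₁ : ℝ) * ∫ z, Lα α ω.1 z ∂P))
    (hS₁bdd : ∀ ω, BddAbove (Set.range fun α : ι =>
      (1 + δ) * G α ω - δ * Real.sqrt (n₁ : ℝ) * ∫ z, Lα α ω.1 z ∂P))
    (hS₂bdd : ∀ ω, BddAbove (Set.range fun α : ι =>
      -(1 + δ) * G α ω - δ * Real.sqrt (n₁ : ℝ) * ∫ z, Lα α ω.1 z ∂P))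
    (hS₁int : Integrable S₁ μ) (hS₂int : Integrable S₂ μ) :
    Risk αh ≤ (1 + 2 * δ) * sInf (Risk '' W)
      + (Real.sqrt (n₁ : ℝ))⁻¹ * ∫ ω, S₁ ω ∂μ
      + (Real.sqrt (n₁ : ℝ))⁻¹ * ∫ ω, S₂ ω ∂μ := by
  have hs : 0 < Real.sqrt (n₁ : ℝ) := Real.sqrt_pos.2 (by positivity)
  set s : ℝ := Real.sqrt (n₁ : ℝ) with hsdef
  subst hμ₀
  subst hμ
  set ν : Measure (Fin n₁ → (Fin d → ℝ) × (Fin r → ℝ)) :=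
    Measure.pi fun _ : Fin n₁ => P with hν
  set μ₀ : Measure (Fin n₀ → (Fin d → ℝ) × (Fin r → ℝ)) :=
    Measure.pi fun _ : Fin n₀ => P with hμ₀
  set μ := μ₀.prod ν with hμ
  -- measure preserving fst
  have hmp : MeasurePreserving Prod.fst μ μ₀ := by
    refine ⟨measurable_fst, ?_⟩
    simp [hμ, Measure.map_fst_prod]
  -- Risk as an integral over μ
  have hRiskIntμ : ∀ α, Integrable (fun ω :
      (Fin n₀ → (Fin d → ℝ) × (Fin r → ℝ)) ×
      (Fin n₁ → (Fin d → ℝ) × (Fin r → ℝ)) => ∫ z, Lα α ω.1 z ∂P) μ := by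
    intro α
    exact (hmp.integrable_comp (hRiskInt α).aestronglyMeasurable).2 (hRiskInt α)
  have hRiskμ : ∀ α, Risk α = ∫ ω, (∫ z, Lα α ω.1 z ∂P) ∂μ := by
    intro α
    have h := integral_fun_fst (μ := μ₀) (ν := ν)
      (f := fun D₀ => ∫ z, Lα α D₀ z ∂P)
    simp only [measure_univ, ENNReal.toReal_one, probReal_univ, one_smul] at h
    rw [hRisk α, hμ, ← h]
  -- nonnegativity of Risk
  have hRisk0 : ∀ α, 0 ≤ Risk α := by
    intro α
    rw [hRisk α]
    refine integral_nonneg fun D₀ => integral_nonneg fun z => ?_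
    rw [hLα]; exact hLloss _ _
  have h1δ : 0 ≤ 1 + δ := by linarith
  -- Step 1 : s * Risk αh ≤ (1+δ) * s * ValRisk αh + ∫ S₂
  have step1 : s * Risk αh ≤ (1 + δ) * s * ValRisk αh + ∫ ω, S₂ ω ∂μ := by
    have hpt : ∀ ω, s * (∫ z, Lα αh ω.1 z ∂P) ≤
        (1 + δ) * s * ((n₁ : ℝ)⁻¹ * ∑ l : Fin n₁, Lα αh ω.1 (ω.2 l)) + S₂ ω := by
      intro ω
      have hb : -(1 + δ) * G αh ω - δ * s * ∫ z, Lα αh ω.1 z ∂P ≤ S₂ ω := by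
        rw [hS₂ ω]; exact le_ciSup (hS₂bdd ω) αh
      rw [hG αh ω] at hb
      set A := (n₁ : ℝ)⁻¹ * ∑ l : Fin n₁, Lα αh ω.1 (ω.2 l)
      set B := ∫ z, Lα αh ω.1 z ∂P
      nlinarith [hb]
    calc s * Risk αh = ∫ ω, s * (∫ z, Lα αh ω.1 z ∂P) ∂μ := by
          rw [hRiskμ αh]; exact (integral_const_mul s _).symm
      _ ≤ ∫ ω, ((1 + δ) * s * ((n₁ : ℝ)⁻¹ * ∑ l : Fin n₁, Lα αh ω.1 (ω.2 l)) + S₂ ω) ∂μ := by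
          refine integral_mono ((hRiskIntμ αh).const_mul s)
            (((hValInt αh).const_mul ((1 + δ) * s)).add hS₂int) hpt
      _ = (1 + δ) * s * ValRisk αh + ∫ ω, S₂ ω ∂μ := by
          rw [integral_add ((hValInt αh).const_mul ((1 + δ) * s)) hS₂int,
            integral_const_mul, hValRisk αh]
  -- Step 3 : for α̃, (1+δ) * s * ValRisk α̃ ≤ ∫ S₁ + (1+2δ) * s * Risk α̃
  have step3 : ∀ β : ι, (1 + δ) * s * ValRisk β ≤
      (∫ ω, S₁ ω ∂μ) + (1 + 2 * δ) * s * Risk β := by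
    intro β
    have hpt : ∀ ω, (1 + δ) * s * ((n₁ : ℝ)⁻¹ * ∑ l : Fin n₁, Lα β ω.1 (ω.2 l)) ≤
        S₁ ω + (1 + 2 * δ) * s * (∫ z, Lα β ω.1 z ∂P) := by
      intro ω
      have hb : (1 + δ) * G β ω - δ * s * ∫ z, Lα β ω.1 z ∂P ≤ S₁ ω := by
        rw [hS₁ ω]; exact le_ciSup (hS₁bdd ω) β
      rw [hG β ω] at hb
      set A := (n₁ : ℝ)⁻¹ * ∑ l : Fin n₁, Lα β ω.1 (ω.2 l)
      set B := ∫ z, Lα β ω.1 z ∂P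
      nlinarith [hb]
    calc (1 + δ) * s * ValRisk β
        = ∫ ω, (1 + δ) * s * ((n₁ : ℝ)⁻¹ * ∑ l : Fin n₁, Lα β ω.1 (ω.2 l)) ∂μ := by
          rw [hValRisk β]; exact (integral_const_mul ((1 + δ) * s) _).symm
      _ ≤ ∫ ω, (S₁ ω + (1 + 2 * δ) * s * (∫ z, Lα β ω.1 z ∂P)) ∂μ := by
          refine integral_mono ((hValInt β).const_mul ((1 + δ) * s))
            (hS₁int.add ((hRiskIntμ β).const_mul ((1 + 2 * δ) * s))) hpt
      _ = (∫ ω, S₁ ω ∂μ) + (1 + 2 * δ) * s * Risk β := by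
          rw [integral_add hS₁int ((hRiskIntμ β).const_mul ((1 + 2 * δ) * s)),
            integral_const_mul, hRiskμ β]
  -- key inequality for every β ∈ W
  have key : ∀ β ∈ W, Risk αh ≤ (1 + 2 * δ) * Risk β
      + s⁻¹ * (∫ ω, S₁ ω ∂μ) + s⁻¹ * ∫ ω, S₂ ω ∂μ := by
    intro β hβ
    have hval : ValRisk αh ≤ ValRisk β := by rw [hW] at hβ; exact hβ
    have step2 : (1 + δ) * s * ValRisk αh ≤ (1 + δ) * s * ValRisk β :=
      mul_le_mul_of_nonneg_left hval (by positivity)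
    have hkey : s * Risk αh ≤ (1 + 2 * δ) * s * Risk β
        + (∫ ω, S₁ ω ∂μ) + ∫ ω, S₂ ω ∂μ := by
      have := step3 β
      linarith [step1]
    have := mul_le_mul_of_nonneg_left hkey (le_of_lt (inv_pos.2 hs))
    have hss : s⁻¹ * s = 1 := inv_mul_cancel₀ (ne_of_gt hs)
    calc Risk αh = s⁻¹ * (s * Risk αh) := by rw [← mul_assoc, hss, one_mul]
      _ ≤ s⁻¹ * ((1 + 2 * δ) * s * Risk β + (∫ ω, S₁ ω ∂μ) + ∫ ω, S₂ ω ∂μ) := this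
      _ = (1 + 2 * δ) * Risk β + s⁻¹ * (∫ ω, S₁ ω ∂μ) + s⁻¹ * ∫ ω, S₂ ω ∂μ := by
          field_simp
  -- conclude via sInf
  have hαhW : αh ∈ W := by rw [hW]; exact Set.mem_setOf.2 (le_refl _)
  have hne : (Risk '' W).Nonempty := ⟨Risk αh, ⟨αh, hαhW, rfl⟩⟩
  have hbdd : BddBelow (Risk '' W) := by
    refine ⟨0, fun x hx => ?_⟩
    obtain ⟨β, _, rfl⟩ := hx
    exact hRisk0 β
  rcases le_or_gt 0 (1 + 2 * δ) with hsgn | hsgn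
  · -- nonneg case
    have hlow : ∀ x ∈ Risk '' W,
        Risk αh - (s⁻¹ * (∫ ω, S₁ ω ∂μ) + s⁻¹ * ∫ ω, S₂ ω ∂μ) ≤ (1 + 2 * δ) * x := by
      rintro x ⟨β, hβ, rfl⟩
      have := key β hβ
      linarith
    have hsmul : (1 + 2 * δ) * sInf (Risk '' W) = sInf ((1 + 2 * δ) • (Risk '' W)) := by
      rw [Real.sInf_smul_of_nonneg hsgn]
      simp [smul_eq_mul]
    have hle : Risk αh - (s⁻¹ * (∫ ω, S₁ ω ∂μ) + s⁻¹ * ∫ ω, S₂ ω ∂μ) ≤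
        sInf ((1 + 2 * δ) • (Risk '' W)) := by
      refine le_csInf (hne.smul_set) ?_
      rintro b ⟨x, hx, rfl⟩
      simpa [smul_eq_mul] using hlow x hx
    rw [← hsmul] at hle
    linarith
  · -- negative case
    have hInfle : sInf (Risk '' W) ≤ Risk αh := csInf_le hbdd ⟨αh, hαhW, rfl⟩
    have hmul : (1 + 2 * δ) * Risk αh ≤ (1 + 2 * δ) * sInf (Risk '' W) :=
      mul_le_mul_of_nonpos_left hInfle (le_of_lt hsgn)
    have := key αh hαhW
    linarith

end
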